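/- Let T be a tree with ℓ ≥ 2 leaves and h heavy edges. Then T is general 2-sparse (i.e., every heavy vertex of T has at least two light neighbors) if and only if P(T) = ℓ − h − 1. -/

import Mathlib

namespace PaperPC

open SimpleGraph

variable {V : Type*}

/-- The degree of a vertex, via the cardinality of its neighbor set. -/
noncomputable def ndeg (G : SimpleGraph V) (v : V) : ℕ := (G.neighborSet v).ncard

/-- A linear forest: an acyclic graph of maximum degree at most 2,
i.e. a vertex-disjoint union of paths.  A spanning linear subforest of `G`
is exactly a path covering of `G` (isolated vertices are one-vertex paths). -/
def IsLinearForest (H : SimpleGraph V) : Prop :=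
  H.IsAcyclic ∧ ∀ v, ndeg H v ≤ 2

/-- The number of paths of a path covering = number of connected components. -/
noncomputable def numPaths (H : SimpleGraph V) : ℕ := Nat.card H.ConnectedComponent

/-- The path covering number `P(G)`. -/
noncomputable def pathCoverNumber (G : SimpleGraph V) : ℕ :=
  sInf {k | ∃ H ≤ G, IsLinearForest H ∧ numPaths H = k}

/-- `H` is a minimum path covering of `G`. -/
def IsMinPathCover (G H : SimpleGraph V) : Prop :=
  H ≤ G ∧ IsLinearForest H ∧ numPaths H = pathCoverNumber G

open scoped Classical in
/-- The path sequence of a path covering: the multiset of the numbers of vertices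
of its paths (a multiset encodes the nondecreasing ordered sequence). -/
noncomputable def pathSeq [Fintype V] (H : SimpleGraph V) : Multiset ℕ :=
  (Finset.univ : Finset H.ConnectedComponent).val.map fun c => c.supp.ncard

/-- `G` admits a unique path sequence. -/
def UniquePathSequence [Fintype V] (G : SimpleGraph V) : Prop :=
  ∀ H₁ H₂ : SimpleGraph V, IsMinPathCover G H₁ → IsMinPathCover G H₂ →
    pathSeq H₁ = pathSeq H₂

/-- Number of leaves (vertices of degree 1). -/
noncomputable def numLeaves (G : SimpleGraph V) : ℕ := {v | ndeg G v = 1}.ncard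

/-- Number of heavy edges (edges both of whose endpoints have degree > 2). -/
noncomputable def numHeavyEdges (G : SimpleGraph V) : ℕ :=
  {e ∈ G.edgeSet | ∀ v ∈ e, 2 < ndeg G v}.ncard

/-- Number of edges. -/
noncomputable def numEdges (G : SimpleGraph V) : ℕ := G.edgeSet.ncard

/-- A graph is 2-sparse if no two adjacent vertices both have degree > 2. -/
def TwoSparse (G : SimpleGraph V) : Prop :=
  ∀ u v, G.Adj u v → ndeg G u ≤ 2 ∨ ndeg G v ≤ 2

/-- `G` is a path graph. -/
def IsPathGraph (G : SimpleGraph V) : Prop := G.IsTree ∧ ∀ v, ndeg G v ≤ 2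

/-- `G` is a cycle graph. -/
def IsCycleGraph (G : SimpleGraph V) : Prop := G.Connected ∧ ∀ v, ndeg G v = 2

/-- A generalized star: a tree with exactly one heavy vertex (the center) in which
all vines have the same number of vertices (equivalently, all leaves are at the same
distance from the center). -/
def IsGenStar (G : SimpleGraph V) : Prop :=
  G.IsTree ∧ ∃ c k, 2 < ndeg G c ∧ (∀ v, v ≠ c → ndeg G v ≤ 2) ∧
    ∀ v, ndeg G v = 1 → G.dist c v = k

/-- An L(2,1)-labeling. -/
def IsL21Labeling (G : SimpleGraph V) (f : V → ℕ) : Prop :=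
  (∀ u v, G.Adj u v → 2 ≤ Nat.dist (f u) (f v)) ∧
  (∀ u v, G.dist u v = 2 → 1 ≤ Nat.dist (f u) (f v))

/-- `λ(G)`: the least `k` such that `G` has an L(2,1)-labeling with labels in `{0,…,k}`. -/
noncomputable def lambdaNum (G : SimpleGraph V) : ℕ :=
  sInf {k | ∃ f : V → ℕ, IsL21Labeling G f ∧ ∀ v, f v ≤ k}

/-- A λ-labeling: an L(2,1)-labeling with maximum label `λ(G)`. -/
def IsLambdaLabeling (G : SimpleGraph V) (f : V → ℕ) : Prop :=
  IsL21Labeling G f ∧ (∀ v, f v ≤ lambdaNum G) ∧ ∃ v, f v = lambdaNum G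

/-- The set of holes of a labeling: unused labels `h` with `1 ≤ h ≤ λ(G) - 1`. -/
def labHoles (G : SimpleGraph V) (f : V → ℕ) : Set ℕ :=
  {h | 1 ≤ h ∧ h + 1 ≤ lambdaNum G ∧ ∀ v, f v ≠ h}

/-- The hole index `ρ(G)`: minimum number of holes over all λ-labelings. -/
noncomputable def holeIndex (G : SimpleGraph V) : ℕ :=
  sInf {k | ∃ f : V → ℕ, IsLambdaLabeling G f ∧ (labHoles G f).ncard = k}

open scoped Classical in
/-- The island sequence of a labeling: the multiset of cardinalities of the maximal
intervals `[a,b]` of consecutive integers all used by the labeling. -/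
noncomputable def islandSeq [Fintype V] (G : SimpleGraph V) (f : V → ℕ) : Multiset ℕ :=
  (((Finset.range (lambdaNum G + 1)) ×ˢ (Finset.range (lambdaNum G + 1))).filter
    (fun q => q.1 ≤ q.2 ∧ (∀ x ∈ Finset.Icc q.1 q.2, ∃ v, f v = x) ∧
      (q.1 = 0 ∨ ∀ v, f v ≠ q.1 - 1) ∧ ∀ v, f v ≠ q.2 + 1)).val.map
    fun q => q.2 - q.1 + 1

/-- `G` admits (at least) two distinct island sequences. -/
def MultipleIslandSequences [Fintype V] (G : SimpleGraph V) : Prop :=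
  ∃ f g : V → ℕ, IsLambdaLabeling G f ∧ IsLambdaLabeling G g ∧
    (labHoles G f).ncard = holeIndex G ∧ (labHoles G g).ncard = holeIndex G ∧
    islandSeq G f ≠ islandSeq G g

/-- A vine: a maximal path one of whose endpoints (`a`) is a leaf and all of whose
vertices are light.  Maximality: any light vertex adjacent to the other end already
lies on the path. -/
def IsVine (G : SimpleGraph V) {a b : V} (p : G.Walk a b) : Prop :=
  p.IsPath ∧ ndeg G a = 1 ∧ (∀ v ∈ p.support, ndeg G v ≤ 2) ∧
  ∀ c, G.Adj b c → ndeg G c ≤ 2 → c ∈ p.support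

/-- A vine with center `v`: the (heavy) vertex adjacent to the non-leaf end of the vine. -/
def IsVineWithCenter (G : SimpleGraph V) {a b : V} (p : G.Walk a b) (v : V) : Prop :=
  IsVine G p ∧ G.Adj b v ∧ 2 < ndeg G v

/-- The matching number of the subgraph of `G` induced by `S`. -/
noncomputable def matchingNumberOn (G : SimpleGraph V) (S : Set V) : ℕ :=
  sSup {k | ∃ M : Set (Sym2 V), M ⊆ G.edgeSet ∧ (∀ e ∈ M, ∀ v ∈ e, v ∈ S) ∧
    (∀ e ∈ M, ∀ f ∈ M, e ≠ f → ∀ v, v ∈ e → v ∉ f) ∧ M.ncard = k}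

/-- Labels used in the family `F`: `A`, or `B k` where `k` records the number of
vertices of each vine of the labeled generalized star that produced the label. -/
inductive Lab | A | B (k : ℕ)

/-- A labeled generalized star with center `c` whose vines have `k` vertices each
(equivalently, every leaf is at distance `k` from `c`); the degenerate case
`deg c = 2` is the convention regarding a path of length `2k` as a labeled
generalized star with two vines.  The neighbors of the center are labeled `B k`,
the other non-leaf vertices (and the center) are labeled `A`, leaves are unlabeled. -/
def IsLGenStar {W : Type*} (H : SimpleGraph W) (c : W) (k : ℕ)
    (lab : W → Option Lab) : Prop :=
  H.IsTree ∧ 2 ≤ ndeg H c ∧ (∀ v, v ≠ c → ndeg H v ≤ 2) ∧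
  (∀ v, ndeg H v = 1 → H.dist c v = k) ∧
  lab c = some Lab.A ∧
  (∀ v, H.Adj c v → lab v = some (Lab.B k)) ∧
  (∀ v, v ≠ c → ¬H.Adj c v → ndeg H v = 1 → lab v = none) ∧
  (∀ v, v ≠ c → ¬H.Adj c v → 2 ≤ ndeg H v → lab v = some Lab.A)

/-- A labeled path: a path with at least three vertices, non-leaf vertices labeled `A`. -/
def IsLPath {W : Type*} (H : SimpleGraph W) (lab : W → Option Lab) : Prop :=
  H.IsTree ∧ (∀ v, ndeg H v ≤ 2) ∧ 3 ≤ Nat.card W ∧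
  (∀ v, ndeg H v = 1 → lab v = none) ∧
  ∀ v, 2 ≤ ndeg H v → lab v = some Lab.A

/-- The induced subgraph of `T` on `s` is a labeled generalized star. -/
def LGenStarOn (T : SimpleGraph V) (s : Set V) (c : V) (k : ℕ)
    (lab : V → Option Lab) : Prop :=
  ∃ hc : c ∈ s, IsLGenStar (T.induce s) ⟨c, hc⟩ k fun v => lab v.1

/-- The induced subgraph of `T` on `s` is a labeled path. -/
def LPathOn (T : SimpleGraph V) (s : Set V) (lab : V → Option Lab) : Prop :=
  IsLPath (T.induce s) fun v => lab v.1

/-- The family `F` of labeled trees, realized as induced subgraphs (on vertex sets `s`)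
of an ambient graph `T`:  start from a labeled generalized star with at least three
vines or from a labeled path, and repeatedly attach, via a single new edge, a labeled
generalized star with at least three vines at a vertex labeled `A` (Type-1), a labeled
path by one of its non-leaf vertices at a vertex labeled `A` (Type-2), or a labeled
generalized star whose vines have the same number of vertices `k` as those of the star
that labeled `u` with `B k`, at a vertex `u` labeled `B k` (Type-3). -/
inductive InF (T : SimpleGraph V) : Set V → (V → Option Lab) → Prop
  | base_star (s : Set V) (c : V) (k : ℕ) (lab : V → Option Lab) :
      LGenStarOn T s c k lab → 3 ≤ {w ∈ s | T.Adj c w}.ncard → InF T s lab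
  | base_path (s : Set V) (lab : V → Option Lab) :
      LPathOn T s lab → InF T s lab
  | type1 (s : Set V) (lab : V → Option Lab) (t : Set V) (lab' : V → Option Lab)
      (u c : V) (k : ℕ) :
      InF T s lab → Disjoint s t → u ∈ s → c ∈ t → lab u = some Lab.A →
      LGenStarOn T t c k lab' → 3 ≤ {w ∈ t | T.Adj c w}.ncard →
      (∀ x ∈ s, ∀ y ∈ t, (T.Adj x y ↔ x = u ∧ y = c)) →
      (∀ x ∈ s, lab' x = lab x) →
      InF T (s ∪ t) lab'
  | type2 (s : Set V) (lab : V → Option Lab) (t : Set V) (lab' : V → Option Lab)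
      (u v : V) :
      InF T s lab → Disjoint s t → u ∈ s → v ∈ t → lab u = some Lab.A →
      LPathOn T t lab' → 2 ≤ {w ∈ t | T.Adj v w}.ncard →
      (∀ x ∈ s, ∀ y ∈ t, (T.Adj x y ↔ x = u ∧ y = v)) →
      (∀ x ∈ s, lab' x = lab x) →
      InF T (s ∪ t) lab'
  | type3 (s : Set V) (lab : V → Option Lab) (t : Set V) (lab' : V → Option Lab)
      (u c : V) (k : ℕ) :
      InF T s lab → Disjoint s t → u ∈ s → c ∈ t → lab u = some (Lab.B k) →
      LGenStarOn T t c k lab' →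
      (∀ x ∈ s, ∀ y ∈ t, (T.Adj x y ↔ x = u ∧ y = c)) →
      (∀ x ∈ s, lab' x = lab x) →
      InF T (s ∪ t) lab'

/-- `G` is obtained from the tree `T` by expanding each edge of `T` into a complete
graph of arbitrary order: there is an embedding `ι` of the vertices of `T` and an
assignment `b` of a block of vertices of `G` to each edge of `T` such that an original
vertex lies in the block of an edge iff it is an endpoint of that edge, blocks of
distinct edges meet only in original vertices, every vertex of `G` lies in some block,
and two distinct vertices of `G` are adjacent iff they lie in a common block. -/
def IsBlockExpansion {U W : Type*} (T : SimpleGraph U) (G : SimpleGraph W) : Prop :=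
  ∃ (ι : U ↪ W) (b : Sym2 U → Set W),
    (∀ (u : U), ∀ e ∈ T.edgeSet, (ι u ∈ b e ↔ u ∈ e)) ∧
    (∀ e ∈ T.edgeSet, ∀ f ∈ T.edgeSet, e ≠ f → b e ∩ b f ⊆ Set.range ι) ∧
    (∀ w : W, ∃ e ∈ T.edgeSet, w ∈ b e) ∧
    (∀ x y : W, G.Adj x y ↔ x ≠ y ∧ ∃ e ∈ T.edgeSet, x ∈ b e ∧ y ∈ b e)

end PaperPC

/-!
A path covering `H` of the tree `T` is a forest with `P(H)` components, so it omits exactly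
`P(H) - 1` edges of `T`. Counting the edge ends at heavy vertices in `T` and in `H`, and using
`∑_{v heavy} (deg v - 2) = ℓ - 2` in a tree, gives the exact identity

  `P(H) = ℓ - h - 1 + (heavy edges in H) + (edges of T \ H with two light ends)`
  `       + ∑_{v heavy} (2 - deg_H v)`.

The three correction terms are nonnegative, so `P(T) ≥ ℓ - h - 1`, and they all vanish exactly
when every heavy vertex keeps two edges of `H`, both to light neighbours, and `H` keeps every edge
between light vertices. Such an `H` exists iff every heavy vertex has two light neighbours.
-/

namespace SimpleGraph

open Finset

variable {V : Type*} {G : SimpleGraph V}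

theorem Walk.reachable_deleteEdges_or {x y a b : V} (p : G.Walk a b) :
    (G.deleteEdges {s(x, y)}).Reachable a b ∨
      (((G.deleteEdges {s(x, y)}).Reachable a x ∨ (G.deleteEdges {s(x, y)}).Reachable a y) ∧
        ((G.deleteEdges {s(x, y)}).Reachable b x ∨ (G.deleteEdges {s(x, y)}).Reachable b y)) := by
  set G' := G.deleteEdges {s(x, y)}
  induction p with
  | nil => exact Or.inl .rfl
  | @cons a c b hac p ih =>
    by_cases he : s(a, c) = s(x, y)
    · have hc : G'.Reachable b x ∨ G'.Reachable b y := by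
        rcases ih with h | ⟨-, h⟩
        · rcases Sym2.eq_iff.mp he with ⟨-, rfl⟩ | ⟨-, rfl⟩
          exacts [Or.inr h.symm, Or.inl h.symm]
        · exact h
      rcases Sym2.eq_iff.mp he with ⟨rfl, -⟩ | ⟨rfl, -⟩
      exacts [Or.inr ⟨Or.inl .rfl, hc⟩, Or.inr ⟨Or.inr .rfl, hc⟩]
    · have hac' : G'.Reachable a c := (deleteEdges_adj.mpr ⟨hac, he⟩).reachable
      rcases ih with h | ⟨h, hb⟩
      · exact Or.inl (hac'.trans h)
      · exact Or.inr ⟨h.imp hac'.trans hac'.trans, hb⟩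

theorem IsBridge.card_connectedComponent_deleteEdges [Finite V] {x y : V} (hxy : G.Adj x y)
    (hb : G.IsBridge s(x, y)) :
    Nat.card (G.deleteEdges {s(x, y)}).ConnectedComponent = Nat.card G.ConnectedComponent + 1 := by
  classical
  set G' := G.deleteEdges {s(x, y)}
  let φ : G'.ConnectedComponent → G.ConnectedComponent :=
    ConnectedComponent.map (Hom.ofLE (deleteEdges_le _))
  let f : G'.ConnectedComponent → Option G.ConnectedComponent := fun c =>
    if c = G'.connectedComponentMk y then none else some (φ c)
  have hf : Function.Bijective f := by
    refine ⟨fun c c' hcc => ?_, fun o => ?_⟩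
    · induction c using ConnectedComponent.ind with | _ a =>
      induction c' using ConnectedComponent.ind with | _ b =>
      by_cases ha : G'.connectedComponentMk a = G'.connectedComponentMk y <;>
        by_cases hb : G'.connectedComponentMk b = G'.connectedComponentMk y <;>
        simp only [f, ha, hb, if_true, if_false, reduceCtorEq, Option.some.injEq] at hcc
      · rw [ha, hb]
      · rw [ConnectedComponent.eq] at ha hb
        obtain ⟨p⟩ := ConnectedComponent.exact hcc
        rcases p.reachable_deleteEdges_or (x := x) (y := y) with h | ⟨ha' | ha', hb' | hb'⟩
        · exact ConnectedComponent.sound h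
        · exact ConnectedComponent.sound (ha'.trans hb'.symm)
        all_goals contradiction
    · rcases o with _ | c
      · exact ⟨G'.connectedComponentMk y, by simp [f]⟩
      induction c using ConnectedComponent.ind with | _ d =>
      by_cases hd : G'.Reachable d y
      · have hx : G'.connectedComponentMk x ≠ G'.connectedComponentMk y :=
          fun h => hb (ConnectedComponent.exact h)
        refine ⟨G'.connectedComponentMk x, ?_⟩
        simp only [f, hx, if_false, Option.some.injEq]
        exact ConnectedComponent.sound (hxy.reachable.trans (hd.mono (deleteEdges_le _)).symm)
      · have hd' : G'.connectedComponentMk d ≠ G'.connectedComponentMk y :=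
          fun h => hd (ConnectedComponent.exact h)
        exact ⟨G'.connectedComponentMk d, by simp [f, hd', φ]⟩
  rw [Nat.card_eq_of_bijective f hf, Finite.card_option]

theorem IsAcyclic.card_connectedComponent_add_card_edgeFinset [Fintype V] [Fintype G.edgeSet]
    (hG : G.IsAcyclic) : Nat.card G.ConnectedComponent + #G.edgeFinset = Fintype.card V := by
  induction hn : #G.edgeFinset generalizing G with
  | zero =>
    obtain rfl : G = ⊥ := by simpa using hn
    rw [add_zero, ← Nat.card_eq_fintype_card]
    exact (Nat.card_eq_of_bijective _ ⟨fun a b h => reachable_bot.mp (ConnectedComponent.exact h),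
      Quot.mk_surjective⟩).symm
  | succ n ih =>
    classical
    obtain ⟨e, he⟩ : G.edgeFinset.Nonempty := by grind [card_pos]
    induction e using Sym2.ind with | _ x y =>
    have hxy : G.Adj x y := by simpa using he
    have hb : G.IsBridge s(x, y) := isAcyclic_iff_forall_adj_isBridge.mp hG hxy
    have hn' : #(G.deleteEdges {s(x, y)}).edgeFinset = n := by
      have : (G.deleteEdges {s(x, y)}).edgeFinset = G.edgeFinset.erase s(x, y) := by
        ext; simp [and_comm]
      rw [this, card_erase_of_mem he, hn, Nat.add_sub_cancel]
    have := ih (hG.anti (deleteEdges_le _)) hn'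
    rw [hb.card_connectedComponent_deleteEdges hxy] at this
    omega

theorem sum_degree_add_card_edges_forall_not [Fintype V] [DecidableEq V] [DecidableRel G.Adj]
    (p : V → Prop) [DecidablePred p] :
    ∑ v with p v, G.degree v + #{e ∈ G.edgeFinset | ∀ v ∈ e, ¬ p v} =
      #{e ∈ G.edgeFinset | ∀ v ∈ e, p v} + #G.edgeFinset := by
  have hinc : ∑ v with p v, G.degree v = ∑ e ∈ G.edgeFinset, #{v | p v ∧ v ∈ e} := by
    have h := sum_card_bipartiteAbove_eq_sum_card_bipartiteBelow (s := {v | p v})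
      (t := G.edgeFinset) (r := fun v e => v ∈ e)
    simp only [bipartiteAbove, bipartiteBelow, filter_filter, ← incidenceFinset_eq_filter,
      card_incidenceFinset_eq_degree] at h
    exact h
  rw [hinc, card_filter, card_filter, card_eq_sum_ones G.edgeFinset, ← sum_add_distrib,
    ← sum_add_distrib]
  refine sum_congr rfl fun e he => ?_
  induction e using Sym2.ind with | _ a b =>
  have hab : a ≠ b := (mem_edgeFinset.mp he).ne
  have : ({v | p v ∧ v ∈ s(a, b)} : Finset V) = ({a, b} : Finset V).filter p := by
    ext; simp [and_comm]
  rw [this]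
  by_cases ha : p a <;> by_cases hb : p b <;> simp [filter_insert, filter_singleton, ha, hb, hab]

theorem IsTree.sum_degree_sub_two_of_two_lt [Fintype V] [Nontrivial V] [DecidableRel G.Adj]
    (hG : G.IsTree) :
    ∑ v with 2 < G.degree v, ((G.degree v : ℤ) - 2) = #{v | G.degree v = 1} - 2 := by
  have hsum : ∑ v, ((G.degree v : ℤ) - 2) = -2 := by
    have hdeg : ∑ v, (G.degree v : ℤ) = 2 * #G.edgeFinset := by
      exact_mod_cast G.sum_degrees_eq_twice_card_edges
    have hcard : (#G.edgeFinset : ℤ) + 1 = Fintype.card V := by exact_mod_cast hG.card_edgeFinset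
    rw [sum_sub_distrib, sum_const, card_univ, nsmul_eq_mul]
    linarith
  have hv (v : V) : (G.degree v : ℤ) - 2 = (if 2 < G.degree v then (G.degree v : ℤ) - 2 else 0)
      - (if G.degree v = 1 then 1 else 0) := by
    have := hG.preconnected.degree_pos_of_nontrivial v
    split_ifs <;> omega
  rw [sum_congr rfl fun v _ => hv v, sum_sub_distrib, ← sum_filter, ← sum_filter, sum_const,
    nsmul_one] at hsum
  omega

end SimpleGraph

namespace PaperPC

open SimpleGraph

variable {V : Type*}

section

variable {G H : SimpleGraph V}

theorem pathCoverNumber_le_numPaths (hHG : H ≤ G) (hH : IsLinearForest H) :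
    pathCoverNumber G ≤ numPaths H :=
  Nat.sInf_le ⟨H, hHG, hH, rfl⟩

theorem exists_isMinPathCover (G : SimpleGraph V) : ∃ H, IsMinPathCover G H := by
  have hbot : IsLinearForest (⊥ : SimpleGraph V) := ⟨isAcyclic_bot, fun v => by simp [ndeg]⟩
  obtain ⟨H, hHG, hH, hP⟩ :
      pathCoverNumber G ∈ {k | ∃ H ≤ G, IsLinearForest H ∧ numPaths H = k} :=
    Nat.sInf_mem ⟨_, ⊥, bot_le, hbot, rfl⟩
  exact ⟨H, hHG, hH, hP⟩

end

section

open Finset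

variable [Fintype V]

theorem ndeg_eq_degree (G : SimpleGraph V) [DecidableRel G.Adj] (v : V) :
    ndeg G v = G.degree v := by
  rw [ndeg, ← card_neighborSet_eq_degree, Set.ncard_eq_toFinset_card', Set.toFinset_card]

theorem numLeaves_eq_card (G : SimpleGraph V) [DecidableRel G.Adj] :
    numLeaves G = #{v | G.degree v = 1} := by
  rw [numLeaves, ← Set.ncard_coe_finset]
  simp [ndeg_eq_degree]

theorem numHeavyEdges_eq_card [DecidableEq V] (G : SimpleGraph V) [DecidableRel G.Adj] :
    numHeavyEdges G = #{e ∈ G.edgeFinset | ∀ v ∈ e, 2 < G.degree v} := by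
  rw [numHeavyEdges, ← Set.ncard_coe_finset]
  simp [ndeg_eq_degree]

theorem ncard_light_neighbors (G : SimpleGraph V) [DecidableRel G.Adj] (v : V) :
    {w | G.Adj v w ∧ G.degree w ≤ 2}.ncard =
      #{w ∈ G.neighborFinset v | G.degree w ≤ 2} := by
  rw [← Set.ncard_coe_finset]
  simp

theorem IsLinearForest.degree_le_two {H : SimpleGraph V} [DecidableRel H.Adj]
    (hH : IsLinearForest H) (v : V) : H.degree v ≤ 2 :=
  ndeg_eq_degree H v ▸ hH.2 v

variable [DecidableEq V] {T H : SimpleGraph V} [DecidableRel T.Adj] [DecidableRel H.Adj]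

theorem numPaths_eq_of_isTree_of_le [Nontrivial V] (hT : T.IsTree) (hHT : H ≤ T) :
    (numPaths H : ℤ) = numLeaves T - numHeavyEdges T - 1
      + #{e ∈ H.edgeFinset | ∀ v ∈ e, 2 < T.degree v}
      + #{e ∈ T.edgeFinset \ H.edgeFinset | ∀ v ∈ e, T.degree v ≤ 2}
      + ∑ v with 2 < T.degree v, (2 - (H.degree v : ℤ)) := by
  have hT' := congrArg (Nat.cast : ℕ → ℤ)
    (sum_degree_add_card_edges_forall_not (G := T) (2 < T.degree ·))
  have hH' := congrArg (Nat.cast : ℕ → ℤ)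
    (sum_degree_add_card_edges_forall_not (G := H) (2 < T.degree ·))
  have hH := congrArg (Nat.cast : ℕ → ℤ)
    (hT.isAcyclic.anti hHT).card_connectedComponent_add_card_edgeFinset
  have hTE := congrArg (Nat.cast : ℕ → ℤ) hT.card_edgeFinset
  have hsum := hT.sum_degree_sub_two_of_two_lt
  have hlight : (#{e ∈ T.edgeFinset \ H.edgeFinset | ∀ v ∈ e, T.degree v ≤ 2} : ℤ)
      + #{e ∈ H.edgeFinset | ∀ v ∈ e, T.degree v ≤ 2}
      = #{e ∈ T.edgeFinset | ∀ v ∈ e, T.degree v ≤ 2} := by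
    rw [← Nat.cast_add, ← card_union_of_disjoint (disjoint_filter_filter sdiff_disjoint),
      ← filter_union, sdiff_union_of_subset (edgeFinset_mono hHT)]
  simp only [not_lt] at hT' hH'
  simp only [sum_sub_distrib, sum_const, nsmul_eq_mul] at hsum ⊢
  push_cast at hT' hH' hH hTE hsum ⊢
  rw [numPaths, numLeaves_eq_card, numHeavyEdges_eq_card]
  linarith

theorem le_numPaths_of_isTree [Nontrivial V] (hT : T.IsTree) (hHT : H ≤ T)
    (hH : ∀ v, H.degree v ≤ 2) :
    (numLeaves T : ℤ) - numHeavyEdges T - 1 ≤ numPaths H := by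
  have hdefect : 0 ≤ ∑ v with 2 < T.degree v, (2 - (H.degree v : ℤ)) :=
    sum_nonneg fun v _ => by have := hH v; omega
  rw [numPaths_eq_of_isTree_of_le hT hHT]
  omega

theorem two_le_card_light_neighbors_of_numPaths_eq [Nontrivial V] (hT : T.IsTree)
    (hHT : H ≤ T) (hH : ∀ v, H.degree v ≤ 2)
    (hP : (numPaths H : ℤ) = numLeaves T - numHeavyEdges T - 1)
    {v : V} (hv : 2 < T.degree v) : 2 ≤ #{w ∈ T.neighborFinset v | T.degree w ≤ 2} := by
  have hnonneg : ∀ u ∈ ({u | 2 < T.degree u} : Finset V), 0 ≤ 2 - (H.degree u : ℤ) :=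
    fun u _ => by have := hH u; omega
  rw [numPaths_eq_of_isTree_of_le hT hHT] at hP
  have hheavy : #{e ∈ H.edgeFinset | ∀ v ∈ e, 2 < T.degree v} = 0 := by
    have := sum_nonneg hnonneg
    omega
  have hdeg : H.degree v = 2 := by
    have := (sum_eq_zero_iff_of_nonneg hnonneg).mp (by have := sum_nonneg hnonneg; omega) v
      (by simpa using hv)
    omega
  calc 2 = #(H.neighborFinset v) := by rw [card_neighborFinset_eq_degree, hdeg]
    _ ≤ _ := card_le_card fun w hw => ?_
  have hvw : H.Adj v w := (mem_neighborFinset _ _ _).mp hw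
  refine mem_filter.mpr ⟨(mem_neighborFinset _ _ _).mpr (hHT hvw), not_lt.mp fun hw' => ?_⟩
  have : s(v, w) ∈ ({e ∈ H.edgeFinset | ∀ v ∈ e, 2 < T.degree v} : Finset _) := by
    simp [hvw, hv, hw']
  simp [card_eq_zero.mp hheavy] at this

theorem exists_isLinearForest_numPaths_eq_of_isTree [Nontrivial V] (hT : T.IsTree)
    (hsp : ∀ v, 2 < T.degree v → 2 ≤ #{w ∈ T.neighborFinset v | T.degree w ≤ 2}) :
    ∃ H ≤ T, IsLinearForest H ∧ (numPaths H : ℤ) = numLeaves T - numHeavyEdges T - 1 := by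
  classical
  choose! K hKsub hKcard using fun v (hv : 2 < T.degree v) => exists_subset_card_eq (hsp v hv)
  have hK {v w : V} (hv : 2 < T.degree v) (hw : w ∈ K v) : T.Adj v w ∧ T.degree w ≤ 2 := by
    simpa using hKsub v hv hw
  let H : SimpleGraph V :=
    { Adj x y := T.Adj x y ∧ (2 < T.degree x → y ∈ K x) ∧ (2 < T.degree y → x ∈ K y)
      symm := ⟨fun _ _ h => ⟨h.1.symm, h.2.2, h.2.1⟩⟩
      loopless := ⟨fun x h => T.loopless.irrefl x h.1⟩ }
  have hHT : H ≤ T := fun _ _ h => h.1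
  have hdeg_heavy {v : V} (hv : 2 < T.degree v) : H.degree v = 2 := by
    have hnbr : H.neighborFinset v = K v := by
      ext w
      simp only [mem_neighborFinset, H]
      exact ⟨fun h => h.2.1 hv, fun hw => ⟨(hK hv hw).1, fun _ => hw, fun h => by
        have := (hK hv hw).2; omega⟩⟩
    rw [← card_neighborFinset_eq_degree, hnbr, hKcard v hv]
  have hdeg (v : V) : H.degree v ≤ 2 := by
    by_cases hv : 2 < T.degree v
    · exact (hdeg_heavy hv).le
    · exact (degree_le_of_le hHT).trans (not_lt.mp hv)
  refine ⟨H, hHT, ⟨hT.isAcyclic.anti hHT, fun v => (ndeg_eq_degree H v).trans_le (hdeg v)⟩,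
    ?_⟩
  have hheavy : #{e ∈ H.edgeFinset | ∀ v ∈ e, 2 < T.degree v} = 0 := by
    refine card_eq_zero.mpr (filter_eq_empty_iff.mpr fun e he hall => ?_)
    induction e using Sym2.ind with | _ a b =>
    have hab : H.Adj a b := by simpa using he
    have := (hK (hall a (by simp)) (hab.2.1 (hall a (by simp)))).2
    have := hall b (by simp)
    omega
  have hlight : #{e ∈ T.edgeFinset \ H.edgeFinset | ∀ v ∈ e, T.degree v ≤ 2} = 0 := by
    refine card_eq_zero.mpr (filter_eq_empty_iff.mpr fun e he hall => ?_)
    induction e using Sym2.ind with | _ a b =>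
    simp only [mem_sdiff, mem_edgeFinset, mem_edgeSet] at he
    have ha := hall a (by simp)
    have hb := hall b (by simp)
    exact he.2 ⟨he.1, fun h => by omega, fun h => by omega⟩
  have hdefect : ∑ v with 2 < T.degree v, (2 - (H.degree v : ℤ)) = 0 :=
    sum_eq_zero fun v hv => by rw [hdeg_heavy (mem_filter.mp hv).2]; rfl
  rw [numPaths_eq_of_isTree_of_le hT hHT, hheavy, hlight, hdefect]
  ring

end

/-- **Theorem (Statement 3).** Let `T` be a tree with `ℓ ≥ 2` leaves and `h` heavy
edges.  Then `T` is general 2-sparse (every heavy vertex has at least two light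
neighbors) if and only if `P(T) = ℓ − h − 1`. -/
theorem tree_generalTwoSparse_iff {V : Type*} [Fintype V] (T : SimpleGraph V)
    (hT : T.IsTree) (hl : 2 ≤ numLeaves T) :
    (∀ v, 2 < ndeg T v → 2 ≤ {w | T.Adj v w ∧ ndeg T w ≤ 2}.ncard) ↔
      (pathCoverNumber T : ℤ) = numLeaves T - numHeavyEdges T - 1 := by
  classical
  have : Nontrivial V := Fintype.one_lt_card_iff_nontrivial.mp <|
    (numLeaves_eq_card T ▸ hl).trans (Finset.card_filter_le _ _)
  obtain ⟨H₀, hH₀T, hH₀, hH₀P⟩ := exists_isMinPathCover T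
  simp only [ndeg_eq_degree, ncard_light_neighbors]
  constructor
  · intro hsp
    obtain ⟨H, hHT, hH, hHP⟩ := exists_isLinearForest_numPaths_eq_of_isTree hT hsp
    have := pathCoverNumber_le_numPaths hHT hH
    have := le_numPaths_of_isTree hT hH₀T hH₀.degree_le_two
    omega
  · intro hP v hv
    rw [← hH₀P] at hP
    exact two_le_card_light_neighbors_of_numPaths_eq hT hH₀T hH₀.degree_le_two hP hv

end PaperPC
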